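/- Let (X,Y) and (X',Y') be independent pairs of finitely supported random variables. For every point p in the tension region T(X,X'; Y,Y') there exist points q ∈ T(X;Y) and q' ∈ T(X';Y') with q + q' ≤ p coordinatewise. Hence the Minkowski sum T(X;Y) + T(X';Y') is a coordinatewise lower bound for T(XX';YY'). -/

import Mathlib

open Real BigOperators Finset

section Defs
variable {Ω : Type} [Fintype Ω]

/-- `p` is a probability mass function on the finite sample space `Ω`. -/
def IsPmf (p : Ω → ℝ) : Prop := (∀ ω, 0 ≤ p ω) ∧ ∑ ω, p ω = 1

/-- Distribution of the random variable `f` under `p`. -/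
noncomputable def distOf (p : Ω → ℝ) {α : Type} [Fintype α] [DecidableEq α]
    (f : Ω → α) : α → ℝ := fun a => ∑ ω, if f ω = a then p ω else 0

/-- Shannon entropy (in nats) of the random variable `f` under `p`. -/
noncomputable def ent (p : Ω → ℝ) {α : Type} [Fintype α] [DecidableEq α]
    (f : Ω → α) : ℝ := ∑ a, Real.negMulLog (distOf p f a)

/-- Mutual information `I(f;g)` under `p`. -/
noncomputable def mi (p : Ω → ℝ) {α β : Type} [Fintype α] [DecidableEq α]
    [Fintype β] [DecidableEq β] (f : Ω → α) (g : Ω → β) : ℝ :=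
  ent p f + ent p g - ent p (fun ω => (f ω, g ω))

/-- Conditional mutual information `I(f;g|h)` under `p`. -/
noncomputable def cmi (p : Ω → ℝ) {α β γ : Type} [Fintype α] [DecidableEq α]
    [Fintype β] [DecidableEq β] [Fintype γ] [DecidableEq γ]
    (f : Ω → α) (g : Ω → β) (h : Ω → γ) : ℝ :=
  ent p (fun ω => (f ω, h ω)) + ent p (fun ω => (g ω, h ω))
    - ent p (fun ω => (f ω, g ω, h ω)) - ent p h

end Defs

/-- Tension region of `(X,Y)`: the set of triples
`(I(X;Z|Y), I(Y;Z|X), I(X;Y|Z))` as `Z` ranges over all finitely supported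
random variables jointly distributed with `(X,Y)`. -/
def tension {Ω : Type} [Fintype Ω] {α β : Type} [Fintype α] [DecidableEq α]
    [Fintype β] [DecidableEq β] (p : Ω → ℝ) (X : Ω → α) (Y : Ω → β) :
    Set (ℝ × ℝ × ℝ) :=
  { t | ∃ (m : ℕ) (q : α × β × Fin m → ℝ), IsPmf q ∧
      distOf q (fun w => (w.1, w.2.1)) = distOf p (fun ω => (X ω, Y ω)) ∧
      t = (cmi q (fun w => w.1) (fun w => w.2.2) (fun w => w.2.1),
           cmi q (fun w => w.2.1) (fun w => w.2.2) (fun w => w.1),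
           cmi q (fun w => w.1) (fun w => w.2.1) (fun w => w.2.2)) }

/-!
Let `Z` witness the point of `T(XX';YY')`, jointly distributed with `(X, X', Y, Y')` under `q`.
Then `Z` itself witnesses a point of `T(X;Y)` and `W = (X, Y, Z)` one of `T(X';Y')`. The three
coordinatewise inequalities are Shannon inequalities obtained from the chain rule: splitting
`I(XX';YY'|Z)` leaves `I(X;Y|Z) + I(X';Y'|XYZ)` plus conditional mutual informations, which are
nonnegative; splitting `I(XX';Z|YY')` (and symmetrically `I(YY';Z|XX')`) works the same way once
the independence of `(X,Y)` and `(X',Y')` is used to kill `I(X;Y'|Y)` and `I(X';XY|Y')`.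
-/

open Function

lemma injective_prod_left_comm {α β γ : Type} :
    Injective (fun x : α × β × γ => (x.2.1, x.1, x.2.2)) :=
  LeftInverse.injective (g := fun x => (x.2.1, x.1, x.2.2)) fun _ => rfl

section Distribution
variable {Ω Ω' α β : Type} [Fintype Ω] [Fintype Ω'] [Fintype α] [DecidableEq α]
  [Fintype β] [DecidableEq β]

lemma distOf_nonneg {p : Ω → ℝ} (hp : ∀ ω, 0 ≤ p ω) (f : Ω → α) (a : α) :
    0 ≤ distOf p f a :=
  Finset.sum_nonneg fun ω _ => by split_ifs <;> simp [hp ω]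

lemma sum_distOf (p : Ω → ℝ) (f : Ω → α) : ∑ a, distOf p f a = ∑ ω, p ω := by
  unfold distOf
  rw [Finset.sum_comm]
  simp

lemma IsPmf.distOf {p : Ω → ℝ} (hp : IsPmf p) (f : Ω → α) : IsPmf (distOf p f) :=
  ⟨distOf_nonneg hp.1 f, by rw [sum_distOf, hp.2]⟩

lemma distOf_distOf (p : Ω → ℝ) (f : Ω → α) (g : α → β) :
    distOf (distOf p f) g = distOf p (fun ω => g (f ω)) := by
  funext b
  unfold distOf
  rw [← Finset.sum_fiberwise Finset.univ f]
  refine Finset.sum_congr rfl fun a _ => ?_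
  split_ifs with h <;> simp +contextual [Finset.sum_filter, h]

lemma distOf_comp_eq_of_distOf_eq {p : Ω → ℝ} {p' : Ω' → ℝ} {f : Ω → α} {f' : Ω' → α}
    (hd : distOf p f = distOf p' f') (g : α → β) :
    distOf p (fun ω => g (f ω)) = distOf p' (fun ω => g (f' ω)) := by
  rw [← distOf_distOf p f g, ← distOf_distOf p' f' g, hd]

lemma ent_distOf (p : Ω → ℝ) (f : Ω → α) (g : α → β) :
    ent (distOf p f) g = ent p (fun ω => g (f ω)) := by
  rw [ent, ent, distOf_distOf]

lemma ent_comp_eq_of_distOf_eq {p : Ω → ℝ} {p' : Ω' → ℝ} {f : Ω → α} {f' : Ω' → α}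
    (hd : distOf p f = distOf p' f') (g : α → β) :
    ent p (fun ω => g (f ω)) = ent p' (fun ω => g (f' ω)) := by
  rw [ent, ent, distOf_comp_eq_of_distOf_eq hd]

lemma mi_comp_eq_of_distOf_eq {γ : Type} [Fintype γ] [DecidableEq γ] {p : Ω → ℝ}
    {p' : Ω' → ℝ} {f : Ω → α} {f' : Ω' → α} (hd : distOf p f = distOf p' f') (g : α → β)
    (h : α → γ) :
    mi p (fun ω => g (f ω)) (fun ω => h (f ω)) = mi p' (fun ω => g (f' ω)) (fun ω => h (f' ω)) := by
  rw [mi, mi, ent_comp_eq_of_distOf_eq hd g, ent_comp_eq_of_distOf_eq hd h,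
    ent_comp_eq_of_distOf_eq hd (fun x => (g x, h x))]

lemma ent_comp_of_injective (p : Ω → ℝ) (f : Ω → α) {e : α → β} (he : Injective e) :
    ent p (fun ω => e (f ω)) = ent p f := by
  have h_image (a : α) : distOf p (fun ω => e (f ω)) (e a) = distOf p f a := by
    simp [distOf, he.eq_iff]
  have h_off (b : β) (hb : b ∉ Set.range e) : distOf p (fun ω => e (f ω)) b = 0 :=
    Finset.sum_eq_zero fun ω _ => if_neg fun h => hb ⟨f ω, h⟩
  exact (Fintype.sum_of_injective e he _ _ (fun b hb => by simp [h_off b hb])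
    fun a => by rw [h_image]).symm

lemma mi_comp_of_injective {γ δ : Type} [Fintype γ] [DecidableEq γ] [Fintype δ]
    [DecidableEq δ] (p : Ω → ℝ) (f : Ω → α) (g : Ω → β) {e : α → γ} {e' : β → δ}
    (he : Injective e) (he' : Injective e') :
    mi p (fun ω => e (f ω)) (fun ω => e' (g ω)) = mi p f g := by
  have h_pair : ent p (fun ω => (e (f ω), e' (g ω))) = ent p (fun ω => (f ω, g ω)) :=
    ent_comp_of_injective p (fun ω => (f ω, g ω)) (e := Prod.map e e') (he.prodMap he')
  rw [mi, mi, ent_comp_of_injective p f he, ent_comp_of_injective p g he', h_pair]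

lemma ent_const {p : Ω → ℝ} (hp : ∑ ω, p ω = 1) (c : α) : ent p (fun _ => c) = 0 := by
  simp [ent, distOf, hp, apply_ite negMulLog]

end Distribution

section ConditionalMutualInformation
variable {Ω : Type} [Fintype Ω] {α β γ δ : Type} [Fintype α] [DecidableEq α]
  [Fintype β] [DecidableEq β] [Fintype γ] [DecidableEq γ] [Fintype δ] [DecidableEq δ]

lemma cmi_distOf {Ω' : Type} [Fintype Ω'] [DecidableEq Ω] (p : Ω' → ℝ) (F : Ω' → Ω)
    (f : Ω → α) (g : Ω → β) (h : Ω → γ) :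
    cmi (distOf p F) f g h = cmi p (fun ω => f (F ω)) (fun ω => g (F ω)) (fun ω => h (F ω)) := by
  simp only [cmi, ent_distOf]

lemma cmi_comm (p : Ω → ℝ) (f : Ω → α) (g : Ω → β) (h : Ω → γ) :
    cmi p f g h = cmi p g f h := by
  have hswap : ent p (fun ω => (g ω, f ω, h ω)) = ent p (fun ω => (f ω, g ω, h ω)) :=
    ent_comp_of_injective p (fun ω => (f ω, g ω, h ω)) (e := fun x => (x.2.1, x.1, x.2.2))
      injective_prod_left_comm
  rw [cmi, cmi, hswap]
  ring

lemma cmi_comp_middle_of_injective (p : Ω → ℝ) (f : Ω → α) (g : Ω → β) (h : Ω → γ)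
    {e : β → δ} (he : Injective e) :
    cmi p f (fun ω => e (g ω)) h = cmi p f g h := by
  have h₁ : ent p (fun ω => (e (g ω), h ω)) = ent p (fun ω => (g ω, h ω)) :=
    ent_comp_of_injective p (fun ω => (g ω, h ω)) (he.prodMap injective_id)
  have h₂ : ent p (fun ω => (f ω, e (g ω), h ω)) = ent p (fun ω => (f ω, g ω, h ω)) :=
    ent_comp_of_injective p (fun ω => (f ω, g ω, h ω)) (e := Prod.map id (Prod.map e id))
      (injective_id.prodMap (he.prodMap injective_id))
  rw [cmi, cmi, h₁, h₂]

lemma cmi_comp_right_of_injective (p : Ω → ℝ) (f : Ω → α) (g : Ω → β) (h : Ω → γ)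
    {e : γ → δ} (he : Injective e) :
    cmi p f g (fun ω => e (h ω)) = cmi p f g h := by
  have h_pair {ε : Type} [Fintype ε] [DecidableEq ε] (u : Ω → ε) :
      ent p (fun ω => (u ω, e (h ω))) = ent p (fun ω => (u ω, h ω)) :=
    ent_comp_of_injective p (fun ω => (u ω, h ω)) (injective_id.prodMap he)
  have h_triple : ent p (fun ω => (f ω, g ω, e (h ω))) = ent p (fun ω => (f ω, g ω, h ω)) :=
    ent_comp_of_injective p (fun ω => (f ω, g ω, h ω)) (e := Prod.map id (Prod.map id e))
      (injective_id.prodMap (injective_id.prodMap he))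
  rw [cmi, cmi, h_pair f, h_pair g, h_triple, ent_comp_of_injective p h he]

lemma cmi_prod_right (p : Ω → ℝ) (f : Ω → α) (g : Ω → β) (h : Ω → γ) (k : Ω → δ) :
    cmi p f (fun ω => (g ω, h ω)) k = cmi p f g k + cmi p f h (fun ω => (g ω, k ω)) := by
  have h₁ : ent p (fun ω => ((g ω, h ω), k ω)) = ent p (fun ω => (h ω, g ω, k ω)) :=
    ent_comp_of_injective p (fun ω => (h ω, g ω, k ω)) (e := fun x => ((x.2.1, x.1), x.2.2))
      (LeftInverse.injective (g := fun x => (x.1.2, x.1.1, x.2)) fun _ => rfl)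
  have h₂ : ent p (fun ω => (f ω, (g ω, h ω), k ω)) = ent p (fun ω => (f ω, h ω, g ω, k ω)) :=
    ent_comp_of_injective p (fun ω => (f ω, h ω, g ω, k ω))
      (e := fun x => (x.1, (x.2.2.1, x.2.1), x.2.2.2))
      (LeftInverse.injective (g := fun x => (x.1, x.2.1.2, x.2.1.1, x.2.2)) fun _ => rfl)
  rw [cmi, cmi, cmi, h₁, h₂]
  ring

lemma cmi_prod_left (p : Ω → ℝ) (f : Ω → α) (g : Ω → β) (h : Ω → γ) (k : Ω → δ) :
    cmi p (fun ω => (f ω, g ω)) h k = cmi p f h k + cmi p g h (fun ω => (f ω, k ω)) := by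
  rw [cmi_comm, cmi_prod_right, cmi_comm p h f, cmi_comm p h g]

end ConditionalMutualInformation

lemma negMulLog_add_mul_log_le {s M N K : ℝ} (hs : 0 ≤ s) (hM : s ≤ M) (hN : s ≤ N)
    (hK : s ≤ K) : negMulLog s + s * log M + s * log N - s * log K ≤ M * N / K - s := by
  rcases hs.eq_or_lt with rfl | hs
  · have : 0 ≤ M * N / K := by positivity
    simpa using this
  have hM : 0 < M := hs.trans_le hM
  have hN : 0 < N := hs.trans_le hN
  have hK : 0 < K := hs.trans_le hK
  calc negMulLog s + s * log M + s * log N - s * log K = s * log (M * N / (s * K)) := by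
        rw [log_div (by positivity) (by positivity), log_mul hM.ne' hN.ne',
          log_mul hs.ne' hK.ne', negMulLog]
        ring
    _ ≤ s * (M * N / (s * K) - 1) :=
        mul_le_mul_of_nonneg_left (log_le_sub_one_of_pos (by positivity)) hs.le
    _ = M * N / K - s := by field_simp

-- `I(A;B) ≥ 0` for the (unnormalised) joint weights `s` of `A` and `B`.
lemma sum_negMulLog_add_negMulLog_sum_le {α β : Type} [Fintype α] [Fintype β]
    (s : α → β → ℝ) (hs : ∀ a b, 0 ≤ s a b) :
    ∑ a, ∑ b, negMulLog (s a b) + negMulLog (∑ a, ∑ b, s a b) ≤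
      ∑ a, negMulLog (∑ b, s a b) + ∑ b, negMulLog (∑ a, s a b) := by
  set M : α → ℝ := fun a => ∑ b, s a b
  set N : β → ℝ := fun b => ∑ a, s a b
  set K : ℝ := ∑ a, M a
  have hK : ∑ b, N b = K := Finset.sum_comm
  have h_pointwise (a : α) (b : β) :
      negMulLog (s a b) + s a b * log (M a) + s a b * log (N b) - s a b * log K ≤
        M a * N b / K - s a b := by
    have hM : s a b ≤ M a := Finset.single_le_sum (fun b _ => hs a b) (Finset.mem_univ b)
    exact negMulLog_add_mul_log_le (hs a b) hM
      (Finset.single_le_sum (fun a _ => hs a b) (Finset.mem_univ a))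
      (hM.trans (Finset.single_le_sum (f := M) (fun a _ => Finset.sum_nonneg fun b _ => hs a b)
        (Finset.mem_univ a)))
  have h_bound : ∑ a, ∑ b, (M a * N b / K - s a b) = 0 := by
    simp only [Finset.sum_sub_distrib, ← Finset.sum_div, ← Finset.mul_sum, ← Finset.sum_mul, hK]
    rw [mul_self_div_self]
    exact sub_self K
  have h_M : ∑ a, ∑ b, s a b * log (M a) = -∑ a, negMulLog (M a) := by
    simp [negMulLog, ← Finset.sum_mul, M]
  have h_N : ∑ a, ∑ b, s a b * log (N b) = -∑ b, negMulLog (N b) := by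
    rw [Finset.sum_comm]
    simp [negMulLog, ← Finset.sum_mul, N]
  have h_K : ∑ a, ∑ b, s a b * log K = -negMulLog K := by
    simp [negMulLog, ← Finset.sum_mul, K, M]
  have := Finset.sum_le_sum fun a (_ : a ∈ Finset.univ) =>
    Finset.sum_le_sum fun b (_ : b ∈ Finset.univ) => h_pointwise a b
  simp only [Finset.sum_add_distrib, Finset.sum_sub_distrib] at this h_bound
  linarith

section Nonnegativity
variable {Ω : Type} [Fintype Ω] {α β γ : Type} [Fintype α] [DecidableEq α]
  [Fintype β] [DecidableEq β] [Fintype γ] [DecidableEq γ]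

lemma cmi_nonneg {p : Ω → ℝ} (hp : ∀ ω, 0 ≤ p ω) (f : Ω → α) (g : Ω → β) (h : Ω → γ) :
    0 ≤ cmi p f g h := by
  rw [← cmi_distOf p (fun ω => (f ω, g ω, h ω)) (fun x => x.1) (fun x => x.2.1) (fun x => x.2.2)]
  set r := distOf p (fun ω => (f ω, g ω, h ω))
  have hr (x : α × β × γ) : 0 ≤ r x := distOf_nonneg hp _ x
  have h_ac : ent r (fun x => (x.1, x.2.2)) = ∑ c, ∑ a, negMulLog (∑ b, r (a, b, c)) := by
    rw [ent, Fintype.sum_prod_type, Finset.sum_comm]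
    refine Finset.sum_congr rfl fun c _ => Finset.sum_congr rfl fun a _ => ?_
    simp [distOf, Fintype.sum_prod_type, ite_and]
  have h_bc : ent r (fun x => (x.2.1, x.2.2)) = ∑ c, ∑ b, negMulLog (∑ a, r (a, b, c)) := by
    rw [ent, Fintype.sum_prod_type, Finset.sum_comm]
    simp [distOf, Fintype.sum_prod_type]
  have h_abc : ent r (fun x => (x.1, x.2.1, x.2.2)) = ∑ c, ∑ a, ∑ b, negMulLog (r (a, b, c)) := by
    have h_id : distOf r (fun x => (x.1, x.2.1, x.2.2)) = r := funext fun x => by simp [distOf]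
    simp only [ent, h_id, Fintype.sum_prod_type]
    conv_rhs => rw [Finset.sum_comm]
    exact Finset.sum_congr rfl fun a _ => Finset.sum_comm
  have h_c : ent r (fun x => x.2.2) = ∑ c, negMulLog (∑ a, ∑ b, r (a, b, c)) := by
    simp [ent, distOf, Fintype.sum_prod_type]
  have := Finset.sum_le_sum fun c (_ : c ∈ Finset.univ) =>
    sum_negMulLog_add_negMulLog_sum_le (fun a b => r (a, b, c)) fun a b => hr (a, b, c)
  simp only [Finset.sum_add_distrib] at this
  rw [cmi, h_ac, h_bc, h_abc, h_c]
  linarith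

lemma mi_eq_cmi_unit {p : Ω → ℝ} (hp : ∑ ω, p ω = 1) (f : Ω → α) (g : Ω → β) :
    mi p f g = cmi p f g (fun _ => ()) := by
  have h_unit {ε : Type} [Fintype ε] [DecidableEq ε] (u : Ω → ε) :
      ent p (fun ω => (u ω, ())) = ent p u :=
    ent_comp_of_injective p u (e := fun a => (a, ())) fun _ _ h => congrArg Prod.fst h
  have h_pair_unit : ent p (fun ω => (f ω, g ω, ())) = ent p (fun ω => (f ω, g ω)) :=
    ent_comp_of_injective p (fun ω => (f ω, g ω)) (e := fun x => (x.1, x.2, ()))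
      fun _ _ h => Prod.ext (congrArg (·.1) h) (congrArg (·.2.1) h)
  rw [mi, cmi, h_unit f, h_unit g, h_pair_unit, ent_const hp ()]
  ring

lemma mi_nonneg {p : Ω → ℝ} (hp : IsPmf p) (f : Ω → α) (g : Ω → β) : 0 ≤ mi p f g := by
  rw [mi_eq_cmi_unit hp.2]
  exact cmi_nonneg hp.1 f g _

end Nonnegativity

section Tensorization
variable {Ω : Type} [Fintype Ω] {α β α' β' γ : Type} [Fintype α] [DecidableEq α]
  [Fintype β] [DecidableEq β] [Fintype α'] [DecidableEq α'] [Fintype β'] [DecidableEq β']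
  [Fintype γ] [DecidableEq γ] {p : Ω → ℝ}
  (X : Ω → α) (Y : Ω → β) (X' : Ω → α') (Y' : Ω → β') (Z : Ω → γ)

lemma cmi_add_cmi_le_mi (hp : IsPmf p) :
    cmi p X Y' Y + cmi p X' (fun ω => (X ω, Y ω)) Y' ≤
      mi p (fun ω => (X ω, Y ω)) (fun ω => (X' ω, Y' ω)) := by
  have h₁ : ent p (fun ω => (Y' ω, Y ω)) = ent p (fun ω => (Y ω, Y' ω)) :=
    ent_comp_of_injective p (fun ω => (Y ω, Y' ω)) (e := Prod.swap) Prod.swap_injective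
  have h₂ : ent p (fun ω => (X ω, Y' ω, Y ω)) = ent p (fun ω => ((X ω, Y ω), Y' ω)) :=
    ent_comp_of_injective p (fun ω => ((X ω, Y ω), Y' ω)) (e := fun x => (x.1.1, x.2, x.1.2))
      (LeftInverse.injective (g := fun x => ((x.1, x.2.2), x.2.1)) fun _ => rfl)
  have h₃ : ent p (fun ω => (X' ω, (X ω, Y ω), Y' ω)) =
      ent p (fun ω => ((X ω, Y ω), (X' ω, Y' ω))) :=
    ent_comp_of_injective p (fun ω => ((X ω, Y ω), (X' ω, Y' ω)))
      (e := fun x => (x.2.1, x.1, x.2.2))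
      injective_prod_left_comm
  have h_YY' := mi_nonneg hp Y Y'
  rw [cmi, cmi, h₁, h₂, h₃]
  rw [mi] at h_YY' ⊢
  linarith

lemma cmi_add_cmi_le_cmi_prod_of_mi_eq_zero (hp : IsPmf p)
    (hind : mi p (fun ω => (X ω, Y ω)) (fun ω => (X' ω, Y' ω)) = 0) :
    cmi p X Z Y + cmi p X' (fun ω => (X ω, Y ω, Z ω)) Y' ≤
      cmi p (fun ω => (X ω, X' ω)) Z (fun ω => (Y ω, Y' ω)) := by
  have h_vanish := cmi_add_cmi_le_mi X Y X' Y' hp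
  rw [hind] at h_vanish
  have h_XY'_Y := cmi_nonneg hp.1 X Y' Y
  have h_X'_XY := cmi_nonneg hp.1 X' (fun ω => (X ω, Y ω)) Y'
  have h_cond : cmi p X Z Y ≤ cmi p X Z (fun ω => (Y ω, Y' ω)) := by
    have h_swap_mid : cmi p X (fun ω => (Z ω, Y' ω)) Y = cmi p X (fun ω => (Y' ω, Z ω)) Y :=
      cmi_comp_middle_of_injective p X (fun ω => (Y' ω, Z ω)) Y (e := Prod.swap)
        Prod.swap_injective
    have h_swap_right : cmi p X Z (fun ω => (Y ω, Y' ω)) = cmi p X Z (fun ω => (Y' ω, Y ω)) :=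
      cmi_comp_right_of_injective p X Z (fun ω => (Y' ω, Y ω)) (e := Prod.swap)
        Prod.swap_injective
    have := cmi_nonneg hp.1 X Y' (fun ω => (Z ω, Y ω))
    rw [cmi_prod_right, cmi_prod_right] at h_swap_mid
    linarith
  have h_witness : cmi p X' (fun ω => (X ω, Y ω, Z ω)) Y' =
      cmi p X' (fun ω => (X ω, Y ω)) Y' + cmi p X' Z (fun ω => (X ω, Y ω, Y' ω)) := by
    have h_left_comm : cmi p X' Z (fun ω => (Y ω, X ω, Y' ω)) =
        cmi p X' Z (fun ω => (X ω, Y ω, Y' ω)) :=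
      cmi_comp_right_of_injective p X' Z (fun ω => (X ω, Y ω, Y' ω))
        (e := fun x => (x.2.1, x.1, x.2.2)) injective_prod_left_comm
    rw [cmi_prod_right, cmi_prod_right, cmi_prod_right, h_left_comm]
    ring
  rw [cmi_prod_left, h_witness]
  linarith

lemma cmi_add_cmi_le_cmi_prod_prod (hp : ∀ ω, 0 ≤ p ω) :
    cmi p X Y Z + cmi p X' Y' (fun ω => (X ω, Y ω, Z ω)) ≤
      cmi p (fun ω => (X ω, X' ω)) (fun ω => (Y ω, Y' ω)) Z := by
  have h_left_comm : cmi p X' Y' (fun ω => (Y ω, X ω, Z ω)) =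
      cmi p X' Y' (fun ω => (X ω, Y ω, Z ω)) :=
    cmi_comp_right_of_injective p X' Y' (fun ω => (X ω, Y ω, Z ω))
      (e := fun x => (x.2.1, x.1, x.2.2)) injective_prod_left_comm
  have := cmi_nonneg hp X Y' (fun ω => (Y ω, Z ω))
  have := cmi_nonneg hp X' Y (fun ω => (X ω, Z ω))
  rw [cmi_prod_left, cmi_prod_right, cmi_prod_right, h_left_comm]
  linarith

lemma cmi_add_cmi_le_cmi_prod_of_mi_eq_zero' (hp : IsPmf p)
    (hind : mi p (fun ω => (X ω, Y ω)) (fun ω => (X' ω, Y' ω)) = 0) :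
    cmi p Y Z X + cmi p Y' (fun ω => (X ω, Y ω, Z ω)) X' ≤
      cmi p (fun ω => (Y ω, Y' ω)) Z (fun ω => (X ω, X' ω)) := by
  have hind_swap : mi p (fun ω => (Y ω, X ω)) (fun ω => (Y' ω, X' ω)) = 0 :=
    (mi_comp_of_injective p (fun ω => (X ω, Y ω)) (fun ω => (X' ω, Y' ω))
      (e := Prod.swap) (e' := Prod.swap) Prod.swap_injective Prod.swap_injective).trans hind
  have h_witness : cmi p Y' (fun ω => (Y ω, X ω, Z ω)) X' =
      cmi p Y' (fun ω => (X ω, Y ω, Z ω)) X' :=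
    cmi_comp_middle_of_injective p Y' (fun ω => (X ω, Y ω, Z ω)) X'
      (e := fun x => (x.2.1, x.1, x.2.2)) injective_prod_left_comm
  rw [← h_witness]
  exact cmi_add_cmi_le_cmi_prod_of_mi_eq_zero Y X Y' X' Z hp hind_swap

end Tensorization

lemma mem_tension_of_distOf_eq {Ω Ω' α β γ : Type} [Fintype Ω] [Fintype Ω'] [Fintype α]
    [DecidableEq α] [Fintype β] [DecidableEq β] [Fintype γ] [DecidableEq γ]
    {p : Ω → ℝ} {X : Ω → α} {Y : Ω → β} {q : Ω' → ℝ} (hq : IsPmf q) {X₀ : Ω' → α}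
    {Y₀ : Ω' → β} (Z : Ω' → γ)
    (hmarg : distOf q (fun w => (X₀ w, Y₀ w)) = distOf p (fun ω => (X ω, Y ω))) :
    (cmi q X₀ Z Y₀, cmi q Y₀ Z X₀, cmi q X₀ Y₀ Z) ∈ tension p X Y := by
  let E := Fintype.equivFin γ
  refine ⟨Fintype.card γ, distOf q (fun w => (X₀ w, Y₀ w, E (Z w))), hq.distOf _, ?_, ?_⟩
  · rw [distOf_distOf]
    exact hmarg
  · simp only [cmi_distOf, cmi_comp_middle_of_injective q _ Z _ E.injective,
      cmi_comp_right_of_injective q _ _ Z E.injective]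

theorem stmt11_general {Ω α β α' β' : Type} [Fintype Ω]
    [Fintype α] [DecidableEq α] [Fintype β] [DecidableEq β]
    [Fintype α'] [DecidableEq α'] [Fintype β'] [DecidableEq β']
    (p : Ω → ℝ)
    (X : Ω → α) (Y : Ω → β) (X' : Ω → α') (Y' : Ω → β')
    (hind : mi p (fun ω => (X ω, Y ω)) (fun ω => (X' ω, Y' ω)) = 0) :
    ∀ t ∈ tension p (fun ω => (X ω, X' ω)) (fun ω => (Y ω, Y' ω)),
      ∃ u ∈ tension p X Y, ∃ u' ∈ tension p X' Y',
        u.1 + u'.1 ≤ t.1 ∧ u.2.1 + u'.2.1 ≤ t.2.1 ∧ u.2.2 + u'.2.2 ≤ t.2.2 := by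
  rintro t ⟨m, q, hq, hmarg, rfl⟩
  let X₀ := fun w : (α × α') × (β × β') × Fin m => w.1.1
  let X₀' := fun w : (α × α') × (β × β') × Fin m => w.1.2
  let Y₀ := fun w : (α × α') × (β × β') × Fin m => w.2.1.1
  let Y₀' := fun w : (α × α') × (β × β') × Fin m => w.2.1.2
  let Z := fun w : (α × α') × (β × β') × Fin m => w.2.2
  have hind_q : mi q (fun w => (X₀ w, Y₀ w)) (fun w => (X₀' w, Y₀' w)) = 0 :=
    (mi_comp_eq_of_distOf_eq hmarg (fun x => (x.1.1, x.2.1)) (fun x => (x.1.2, x.2.2))).trans hind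
  refine ⟨_, mem_tension_of_distOf_eq hq Z
      (distOf_comp_eq_of_distOf_eq hmarg fun x => (x.1.1, x.2.1)),
    _, mem_tension_of_distOf_eq hq (fun w => (X₀ w, Y₀ w, Z w))
      (distOf_comp_eq_of_distOf_eq hmarg fun x => (x.1.2, x.2.2)), ?_, ?_, ?_⟩
  · exact cmi_add_cmi_le_cmi_prod_of_mi_eq_zero X₀ Y₀ X₀' Y₀' Z hq hind_q
  · exact cmi_add_cmi_le_cmi_prod_of_mi_eq_zero' X₀ Y₀ X₀' Y₀' Z hq hind_q
  · exact cmi_add_cmi_le_cmi_prod_prod X₀ Y₀ X₀' Y₀' Z hq.1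

/-- If `(X,Y)` and `(X',Y')` are independent, then every point of the tension
region `T(XX';YY')` dominates (coordinatewise) a sum of a point of `T(X;Y)`
and a point of `T(X';Y')`. -/
theorem stmt11 {Ω α β α' β' : Type} [Fintype Ω]
    [Fintype α] [DecidableEq α] [Fintype β] [DecidableEq β]
    [Fintype α'] [DecidableEq α'] [Fintype β'] [DecidableEq β']
    (p : Ω → ℝ) (hp : IsPmf p)
    (X : Ω → α) (Y : Ω → β) (X' : Ω → α') (Y' : Ω → β')
    (hind : mi p (fun ω => (X ω, Y ω)) (fun ω => (X' ω, Y' ω)) = 0) :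
    ∀ t ∈ tension p (fun ω => (X ω, X' ω)) (fun ω => (Y ω, Y' ω)),
      ∃ u ∈ tension p X Y, ∃ u' ∈ tension p X' Y',
        u.1 + u'.1 ≤ t.1 ∧ u.2.1 + u'.2.1 ≤ t.2.1 ∧ u.2.2 + u'.2.2 ≤ t.2.2 :=
  stmt11_general p X Y X' Y' hind
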